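/- With N-entries defined as above, if node u has an N-entry for document d and w_q is a child of u, then there is at most one node v in the subtree rooted at w_q that has an N-entry for d and whose lowest proper ancestor with an N-entry for d is u; moreover, if such v exists, it is the LCA of the first and last leaves labeled d (in left-to-right order) in the subtree of w_q. -/
import Mathlib


/-- A finite rooted tree, given by a parent function, a depth function and an LCA
operation satisfying the usual specifications.  `parent root = root`, and every node
reaches the root by iterating `parent` (guaranteed by the depth axioms). -/
structure RTree (V : Type*) where
  root : V
  parent : V → V
  lca : V → V → V
  depth : V → ℕ
  parent_root : parent root = root
  depth_eq_zero_iff : ∀ v, depth v = 0 ↔ v = root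
  depth_parent : ∀ v, v ≠ root → depth (parent v) + 1 = depth v
  lca_anc_left : ∀ u v, ∃ k, parent^[k] u = lca u v
  lca_anc_right : ∀ u v, ∃ k, parent^[k] v = lca u v
  lca_greatest : ∀ u v w, (∃ k, parent^[k] u = w) → (∃ k, parent^[k] v = w) →
    ∃ k, parent^[k] (lca u v) = w

namespace RTree

variable {V : Type*} (T : RTree V)

/-- `u` is an ancestor of `v` (possibly `u = v`). -/
def Anc (u v : V) : Prop := ∃ k, T.parent^[k] v = u

/-- `u` is a proper (strict) ancestor of `v`. -/
def ProperAnc (u v : V) : Prop := T.Anc u v ∧ u ≠ v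

/-- `c` is a child of `u`. -/
def IsChild (c u : V) : Prop := T.parent c = u ∧ c ≠ u

/-- A leaf is a node without children. -/
def IsLeaf (v : V) : Prop := ∀ c, ¬ T.IsChild c v

end RTree

/-- Node `w` has an N-entry for document `d`: either `w` is a leaf labeled `d`, or `w`
is internal and at least two (distinct) children of `w` contain a leaf labeled `d` in
their subtrees. -/
def HasNEntry {V D : Type*} (T : RTree V) (doc : V → D) (d : D) (w : V) : Prop :=
  (T.IsLeaf w ∧ doc w = d) ∨
  (¬ T.IsLeaf w ∧ ∃ c₁ c₂, T.IsChild c₁ w ∧ T.IsChild c₂ w ∧ c₁ ≠ c₂ ∧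
    (∃ lf, T.IsLeaf lf ∧ doc lf = d ∧ T.Anc c₁ lf) ∧
    (∃ lf, T.IsLeaf lf ∧ doc lf = d ∧ T.Anc c₂ lf))

/-- `u` is the lowest proper ancestor of `w` having an N-entry for `d`. -/
def IsLowestDAnc {V D : Type*} (T : RTree V) (doc : V → D) (d : D) (u w : V) : Prop :=
  HasNEntry T doc d u ∧ T.ProperAnc u w ∧
    ∀ x, HasNEntry T doc d x → T.ProperAnc x w → T.Anc x u

namespace RTree

variable {V : Type*} (T : RTree V)

lemma anc_refl (v : V) : T.Anc v v := ⟨0, rfl⟩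

lemma anc_trans {a b c : V} (h1 : T.Anc a b) (h2 : T.Anc b c) : T.Anc a c := by
  obtain ⟨k, hk⟩ := h1; obtain ⟨m, hm⟩ := h2
  exact ⟨k + m, by rw [Function.iterate_add_apply, hm, hk]⟩

lemma depth_parent_le (v : V) : T.depth (T.parent v) ≤ T.depth v := by
  by_cases h : v = T.root
  · subst h; rw [T.parent_root]
  · have := T.depth_parent v h; omega

lemma depth_iterate_le (k : ℕ) (b : V) : T.depth (T.parent^[k] b) ≤ T.depth b := by
  induction k with
  | zero => simp
  | succ n ih => rw [Function.iterate_succ_apply']; exact le_trans (T.depth_parent_le _) ih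

lemma iterate_root (k : ℕ) : T.parent^[k] T.root = T.root := by
  induction k with
  | zero => rfl
  | succ n ih => rw [Function.iterate_succ_apply', ih, T.parent_root]

lemma depth_lt_of_proper {a b : V} (h : T.Anc a b) (hne : a ≠ b) :
    T.depth a < T.depth b := by
  obtain ⟨k, hk⟩ := h
  match k, hk with
  | 0, hk => exact absurd hk.symm hne
  | k+1, hk =>
    by_cases hb : b = T.root
    · subst hb; rw [T.iterate_root] at hk; exact absurd hk.symm hne
    · have h1 : T.depth a ≤ T.depth (T.parent b) := by
        rw [← hk, Function.iterate_succ_apply]; exact T.depth_iterate_le k _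
      have := T.depth_parent b hb; omega

lemma anc_antisymm {a b : V} (h1 : T.Anc a b) (h2 : T.Anc b a) : a = b := by
  by_contra hne
  have h3 := T.depth_lt_of_proper h1 hne
  have h4 := T.depth_lt_of_proper h2 (Ne.symm hne)
  omega

lemma anc_comparable {a b x : V} (ha : T.Anc a x) (hb : T.Anc b x) :
    T.Anc a b ∨ T.Anc b a := by
  obtain ⟨k, hk⟩ := ha; obtain ⟨m, hm⟩ := hb
  rcases le_total k m with h | h
  · right
    exact ⟨m - k, by rw [← hk, ← Function.iterate_add_apply, Nat.sub_add_cancel h, hm]⟩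
  · left
    exact ⟨k - m, by rw [← hm, ← Function.iterate_add_apply, Nat.sub_add_cancel h, hk]⟩

lemma exists_child_anc {v x : V} (h : T.Anc v x) (hne : v ≠ x) :
    ∃ c, T.IsChild c v ∧ T.Anc c x := by
  obtain ⟨k, hk⟩ := h
  induction k with
  | zero => simp only [Function.iterate_zero, id_eq] at hk; exact absurd hk (Ne.symm hne)
  | succ n ih =>
    rw [Function.iterate_succ_apply'] at hk
    by_cases hc : T.parent^[n] x = v
    · exact ih hc
    · exact ⟨T.parent^[n] x, ⟨hk, hc⟩, ⟨n, rfl⟩⟩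

lemma leaf_no_desc {v x : V} (hl : T.IsLeaf v) (h : T.Anc v x) : v = x := by
  by_contra hne
  obtain ⟨c, hc, _⟩ := T.exists_child_anc h hne
  exact hl c hc

lemma child_ne_root {c v : V} (h : T.IsChild c v) : c ≠ T.root := by
  intro hr
  apply h.2
  rw [← h.1, hr, T.parent_root]

lemma depth_child {c v : V} (h : T.IsChild c v) : T.depth c = T.depth v + 1 := by
  have hr := T.child_ne_root h
  have := T.depth_parent c hr
  rw [h.1] at this; omega

lemma anc_of_child {c v : V} (h : T.IsChild c v) : T.Anc v c :=
  ⟨1, by simpa using h.1⟩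

lemma child_unique {v c₁ c₂ x : V} (h1 : T.IsChild c₁ v) (h2 : T.IsChild c₂ v)
    (a1 : T.Anc c₁ x) (a2 : T.Anc c₂ x) : c₁ = c₂ := by
  have d1 := T.depth_child h1
  have d2 := T.depth_child h2
  by_contra hne
  rcases T.anc_comparable a1 a2 with h | h
  · have := T.depth_lt_of_proper h hne; omega
  · have := T.depth_lt_of_proper h (Ne.symm hne); omega

end RTree

/-- Every node with an N-entry for `d` has a `d`-labeled leaf in its subtree. -/
lemma nentry_leaf {V D : Type*} (T : RTree V) (doc : V → D) (d : D) {v : V}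
    (h : HasNEntry T doc d v) : ∃ lf, T.IsLeaf lf ∧ doc lf = d ∧ T.Anc v lf := by
  rcases h with ⟨hl, hd⟩ | ⟨_, c₁, c₂, hc₁, _, _, ⟨lf, h1, h2, h3⟩, _⟩
  · exact ⟨v, hl, hd, T.anc_refl v⟩
  · exact ⟨lf, h1, h2, T.anc_trans (T.anc_of_child hc₁) h3⟩

/-- Key lemma: if `v` lies in the subtree of `wq` (a child of `u`), has an N-entry
for `d`, and its lowest proper `d`-ancestor is `u`, then `v` is an ancestor of every
`d`-labeled leaf in the subtree of `wq`. -/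
lemma anc_all_leaves {V D : Type*} (T : RTree V) (doc : V → D) (d : D) {u wq v : V}
    (hwq : T.IsChild wq u) (hv : T.Anc wq v) (hvN : HasNEntry T doc d v)
    (hlow : IsLowestDAnc T doc d u v)
    {lf : V} (hl : T.IsLeaf lf) (hd : doc lf = d) (hlf : T.Anc wq lf) :
    T.Anc v lf := by
  set m := T.lca v lf with hm
  have hmv : T.Anc m v := T.lca_anc_left v lf
  have hmlf : T.Anc m lf := T.lca_anc_right v lf
  by_cases hmv' : m = v
  · rw [← hmv']; exact hmlf
  · have hwm : T.Anc wq m := T.lca_greatest v lf wq hv hlf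
    obtain ⟨c₁, hc₁, hc₁v⟩ := T.exists_child_anc hmv hmv'
    have hmlf' : m ≠ lf := by
      intro h
      exact hmv' (T.leaf_no_desc (h ▸ hl) hmv)
    obtain ⟨c₂, hc₂, hc₂lf⟩ := T.exists_child_anc hmlf hmlf'
    have hcc : c₁ ≠ c₂ := by
      intro h; subst h
      have h1 : T.Anc c₁ m := T.lca_greatest v lf c₁ hc₁v hc₂lf
      exact hc₁.2 (T.anc_antisymm h1 (T.anc_of_child hc₁))
    obtain ⟨lf₁, hlf₁, hdlf₁, hvlf₁⟩ := nentry_leaf T doc d hvN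
    have hNm : HasNEntry T doc d m := Or.inr ⟨fun h => h c₁ hc₁, c₁, c₂, hc₁, hc₂, hcc,
      ⟨lf₁, hlf₁, hdlf₁, T.anc_trans hc₁v hvlf₁⟩, ⟨lf, hl, hd, hc₂lf⟩⟩
    have hmu : T.Anc m u := hlow.2.2 m hNm ⟨hmv, hmv'⟩
    have hum : T.Anc u m := T.anc_trans (T.anc_of_child hwq) hwm
    have hmu' : m = u := T.anc_antisymm hmu hum
    have hwu : T.Anc wq u := hmu' ▸ hwm
    exact absurd (T.anc_antisymm hwu (T.anc_of_child hwq)) hwq.2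

/-- Suppose `u` has an N-entry for `d` and `wq` is a child of `u`.
The leaves are enumerated left-to-right as `ℓ 0, …, ℓ (L-1)`, and the enumeration is
planar: the leaves of any subtree form an interval of indices.  Then there is at most
one node `v` in the subtree of `wq` having an N-entry for `d` whose lowest proper
`d`-ancestor is `u`; moreover any such `v` is the LCA of the first and the last leaf
labeled `d` (in left-to-right order) in the subtree of `wq`. -/
theorem unique_origin_in_child {V D : Type*} (T : RTree V) (doc : V → D) (d : D)
    (L : ℕ) (ℓ : Fin L → V) (hinj : Function.Injective ℓ)
    (hleaf : ∀ v, T.IsLeaf v ↔ ∃ i, ℓ i = v)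
    (hplanar : ∀ x : V, ∀ i j k : Fin L, i ≤ j → j ≤ k →
      T.Anc x (ℓ i) → T.Anc x (ℓ k) → T.Anc x (ℓ j))
    (u wq : V) (hu : HasNEntry T doc d u) (hwq : T.IsChild wq u) :
    (∀ v₁ v₂ : V,
      (T.Anc wq v₁ ∧ HasNEntry T doc d v₁ ∧ IsLowestDAnc T doc d u v₁) →
      (T.Anc wq v₂ ∧ HasNEntry T doc d v₂ ∧ IsLowestDAnc T doc d u v₂) → v₁ = v₂) ∧
    (∀ v : V, (T.Anc wq v ∧ HasNEntry T doc d v ∧ IsLowestDAnc T doc d u v) →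
      ∀ i₁ i₂ : Fin L,
        (T.Anc wq (ℓ i₁) ∧ doc (ℓ i₁) = d) → (T.Anc wq (ℓ i₂) ∧ doc (ℓ i₂) = d) →
        (∀ i : Fin L, (T.Anc wq (ℓ i) ∧ doc (ℓ i) = d) → i₁ ≤ i ∧ i ≤ i₂) →
        v = T.lca (ℓ i₁) (ℓ i₂)) := by
  constructor
  · rintro v₁ v₂ ⟨ha₁, hN₁, hlow₁⟩ ⟨ha₂, hN₂, hlow₂⟩
    obtain ⟨lf, hl, hd, h1⟩ := nentry_leaf T doc d hN₁
    have hwlf : T.Anc wq lf := T.anc_trans ha₁ h1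
    have h2 : T.Anc v₂ lf := anc_all_leaves T doc d hwq ha₂ hN₂ hlow₂ hl hd hwlf
    rcases T.anc_comparable h1 h2 with h | h
    · by_contra hne
      have h3 := hlow₂.2.2 v₁ hN₁ ⟨h, hne⟩
      exact hlow₁.2.1.2 (T.anc_antisymm hlow₁.2.1.1 h3)
    · by_contra hne
      have h3 := hlow₁.2.2 v₂ hN₂ ⟨h, Ne.symm hne⟩
      exact hlow₂.2.1.2 (T.anc_antisymm hlow₂.2.1.1 h3)
  · rintro v ⟨hav, hNv, hlow⟩ i₁ i₂ ⟨ha1, hd1⟩ ⟨ha2, hd2⟩ hmin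
    have hleaf1 : T.IsLeaf (ℓ i₁) := (hleaf _).2 ⟨i₁, rfl⟩
    have hleaf2 : T.IsLeaf (ℓ i₂) := (hleaf _).2 ⟨i₂, rfl⟩
    have hv1 : T.Anc v (ℓ i₁) := anc_all_leaves T doc d hwq hav hNv hlow hleaf1 hd1 ha1
    have hv2 : T.Anc v (ℓ i₂) := anc_all_leaves T doc d hwq hav hNv hlow hleaf2 hd2 ha2
    set m := T.lca (ℓ i₁) (ℓ i₂) with hm
    have hvm : T.Anc v m := T.lca_greatest _ _ v hv1 hv2
    have hm1 : T.Anc m (ℓ i₁) := T.lca_anc_left _ _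
    have hm2 : T.Anc m (ℓ i₂) := T.lca_anc_right _ _
    by_contra hne
    rcases hNv with ⟨hvl, hvd⟩ |
      ⟨_, c₁, c₂, hc₁, hc₂, hcc, ⟨lf₁, hl₁, hd₁', h₁⟩, ⟨lf₂, hl₂, hd₂', h₂⟩⟩
    · have e1 : v = ℓ i₁ := T.leaf_no_desc hvl hv1
      exact hne (T.anc_antisymm hvm (by rw [e1]; exact hm1))
    · obtain ⟨j₁, hj₁⟩ := (hleaf lf₁).1 hl₁
      obtain ⟨j₂, hj₂⟩ := (hleaf lf₂).1 hl₂
      have hw₁ : T.Anc wq (ℓ j₁) := by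
        rw [hj₁]; exact T.anc_trans hav (T.anc_trans (T.anc_of_child hc₁) h₁)
      have hw₂ : T.Anc wq (ℓ j₂) := by
        rw [hj₂]; exact T.anc_trans hav (T.anc_trans (T.anc_of_child hc₂) h₂)
      have hb₁ := hmin j₁ ⟨hw₁, by rw [hj₁]; exact hd₁'⟩
      have hb₂ := hmin j₂ ⟨hw₂, by rw [hj₂]; exact hd₂'⟩
      obtain ⟨c, hc, hcm⟩ := T.exists_child_anc hvm hne
      have hc1' : T.Anc c (ℓ i₁) := T.anc_trans hcm hm1
      have hc2' : T.Anc c (ℓ i₂) := T.anc_trans hcm hm2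
      have hcj₁ : T.Anc c (ℓ j₁) := hplanar c i₁ j₁ i₂ hb₁.1 hb₁.2 hc1' hc2'
      have hcj₂ : T.Anc c (ℓ j₂) := hplanar c i₁ j₂ i₂ hb₂.1 hb₂.2 hc1' hc2'
      have e1 : c = c₁ := T.child_unique hc hc₁ hcj₁ (by rw [hj₁]; exact h₁)
      have e2 : c = c₂ := T.child_unique hc hc₂ hcj₂ (by rw [hj₂]; exact h₂)
      exact hcc (e1.symm.trans e2)
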